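/- arXiv:1202.1813 — 4 statements merged into one kernel-verified Lean document; each statement's English description precedes it below -/
import Mathlib

section
/- Fix integers N ≥ 2 and 0 ≤ m < n ≤ N-1. Define R̂_{n,m}(-1) as the limit as A → -1 of the expression (-1)^{n-m}·({m}!·{2N-2m-2}!!·{2N-m-1}^+!)/({n}!·{2N-2n-2}!!·{2N-n-1}^+!), where {k} = (-A)^k - (-A)^{-k}, {k}^+ = (-A)^k + (-A)^{-k}, {k}! = {1}{2}⋯{k}, and {k}!! = {k}{k-2}⋯. Then this limit equals ((-4)^{n-m}·m!·(N-1-m)!)/(n!·(N-1-n)!). -/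
open Filter Finset

/-!
Writing `q = A²`, each bracket factors as `{k} = (A² - 1) · (-A)^{-k} (1 + q + ⋯ + q^{k-1})`, and the
second factor tends to `k` as `A → -1`. Both the numerator and the denominator contain exactly `N - 1`
brackets (`m + (N - 1 - m)` and `n + (N - 1 - n)`), so the vanishing factors `(A² - 1)^{N-1}` cancel and
what remains is continuous at `-1`, where `{k}^+ = 2`.
-/

/-- `{k} = (-A)^k - (-A)^{-k}` -/
noncomputable def qbr (A : ℂ) (k : ℕ) : ℂ := (-A) ^ (k : ℤ) - (-A) ^ (-(k : ℤ))

/-- `{k}^+ = (-A)^k + (-A)^{-k}` -/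
noncomputable def qbrP (A : ℂ) (k : ℕ) : ℂ := (-A) ^ (k : ℤ) + (-A) ^ (-(k : ℤ))

/-- `{k}! = {1}{2}⋯{k}` -/
noncomputable def qfact (A : ℂ) (k : ℕ) : ℂ := ∏ j ∈ Finset.range k, qbr A (j + 1)

/-- `{k}^+! = {1}^+{2}^+⋯{k}^+` -/
noncomputable def qfactP (A : ℂ) (k : ℕ) : ℂ := ∏ j ∈ Finset.range k, qbrP A (j + 1)

/-- `{k}!! = {k}{k-2}{k-4}⋯` (down to `1` or `2`) -/
noncomputable def qdfact (A : ℂ) (k : ℕ) : ℂ :=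
  ∏ i ∈ Finset.range ((k + 1) / 2), qbr A (k - 2 * i)

/-- The bracket `{k}` divided by `A² - 1`. -/
noncomputable def qint (A : ℂ) (k : ℕ) : ℂ := (-A) ^ (-(k : ℤ)) * ∑ i ∈ range k, (A ^ 2) ^ i

lemma qbr_eq_mul_qint {A : ℂ} (hA : A ≠ 0) (k : ℕ) : qbr A k = (A ^ 2 - 1) * qint A k := by
  have hk : (-A) ^ (k : ℤ) = (-A) ^ (-(k : ℤ)) * (A ^ 2) ^ k := by
    rw [← neg_sq, ← pow_mul, ← zpow_natCast, ← zpow_add₀ (neg_ne_zero.mpr hA)]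
    congr 1
    push_cast
    ring
  rw [qbr, qint, hk]
  linear_combination (-(-A) ^ (-(k : ℤ))) * geom_sum_mul (A ^ 2) k

lemma continuousAt_neg_zpow (z : ℤ) : ContinuousAt (fun A : ℂ => (-A) ^ z) (-1) :=
  (continuousAt_zpow₀ _ _ (Or.inl (by norm_num))).comp continuous_neg.continuousAt

lemma continuousAt_qint (k : ℕ) : ContinuousAt (qint · k) (-1) :=
  (continuousAt_neg_zpow _).mul
    (continuous_finsetSum _ fun i _ => (continuous_pow 2).pow i).continuousAt

lemma qint_neg_one (k : ℕ) : qint (-1) k = k := by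
  simp [qint]

lemma prod_qbr_eq {A : ℂ} (hA : A ≠ 0) (f : ℕ → ℕ) (k : ℕ) :
    ∏ j ∈ range k, qbr A (f j) = (A ^ 2 - 1) ^ k * ∏ j ∈ range k, qint A (f j) := by
  simp only [qbr_eq_mul_qint hA, prod_mul_distrib, prod_const, card_range]

lemma continuousAt_prod_qint (f : ℕ → ℕ) (k : ℕ) :
    ContinuousAt (fun A => ∏ j ∈ range k, qint A (f j)) (-1) :=
  tendsto_finsetProd _ fun j _ => continuousAt_qint (f j)

lemma qdfact_two_mul (A : ℂ) (k : ℕ) :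
    qdfact A (2 * k) = ∏ j ∈ range k, qbr A (2 * (j + 1)) := by
  rw [qdfact, show (2 * k + 1) / 2 = k by omega, ← prod_range_reflect _ k]
  refine prod_congr rfl fun i hi => ?_
  have := mem_range.mp hi
  congr 1
  omega

lemma continuousAt_qfactP (k : ℕ) : ContinuousAt (qfactP · k) (-1) :=
  tendsto_finsetProd _ fun _ _ => (continuousAt_neg_zpow _).add (continuousAt_neg_zpow _)

lemma qfactP_neg_one (k : ℕ) : qfactP (-1) k = 2 ^ k := by
  simp only [qfactP, qbrP, neg_neg, one_zpow]
  norm_num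

/-- `{m}!·{2N-2m-2}!!·{2N-m-1}^+!` with the factor `(A² - 1)^{N-1}` removed. -/
noncomputable def reducedTerm (N : ℕ) (A : ℂ) (m : ℕ) : ℂ :=
  (∏ j ∈ range m, qint A (j + 1)) * (∏ j ∈ range (N - 1 - m), qint A (2 * (j + 1))) *
    qfactP A (2 * N - m - 1)

lemma qfact_mul_qdfact_mul_qfactP_eq {A : ℂ} (hA : A ≠ 0) {N m : ℕ} (hm : m ≤ N - 1) :
    qfact A m * qdfact A (2 * N - 2 * m - 2) * qfactP A (2 * N - m - 1) =
      (A ^ 2 - 1) ^ (N - 1) * reducedTerm N A m := by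
  rw [show 2 * N - 2 * m - 2 = 2 * (N - 1 - m) by omega, qdfact_two_mul, qfact,
    prod_qbr_eq hA (· + 1), prod_qbr_eq hA (fun j => 2 * (j + 1)), reducedTerm,
    ← Nat.add_sub_of_le hm, pow_add, Nat.add_sub_cancel_left]
  ring

lemma continuousAt_reducedTerm (N m : ℕ) : ContinuousAt (reducedTerm N · m) (-1) :=
  ((continuousAt_prod_qint _ _).mul (continuousAt_prod_qint _ _)).mul (continuousAt_qfactP _)

lemma reducedTerm_neg_one (N m : ℕ) :
    reducedTerm N (-1) m =
      m.factorial * (2 ^ (N - 1 - m) * (N - 1 - m).factorial) * 2 ^ (2 * N - m - 1) := by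
  simp only [reducedTerm, qint_neg_one, qfactP_neg_one]
  have hfact (k : ℕ) : ∏ j ∈ range k, ((j + 1 : ℕ) : ℂ) = k.factorial := by
    exact_mod_cast prod_range_add_one_eq_factorial k
  push_cast [prod_mul_distrib, prod_const, card_range] at hfact ⊢
  rw [hfact, hfact]

lemma neg_one_pow_mul_reducedTerm_div_reducedTerm_neg_one {N m n : ℕ} (hmn : m ≤ n)
    (hn : n ≤ N - 1) :
    (-1 : ℂ) ^ (n - m) * reducedTerm N (-1) m / reducedTerm N (-1) n =
      (-4 : ℂ) ^ (n - m) * (m.factorial : ℂ) * ((N - 1 - m).factorial : ℂ) /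
        ((n.factorial : ℂ) * ((N - 1 - n).factorial : ℂ)) := by
  have hpow : (2 : ℂ) ^ (N - 1 - m) * 2 ^ (2 * N - m - 1) =
      4 ^ (n - m) * (2 ^ (N - 1 - n) * 2 ^ (2 * N - n - 1)) := by
    rw [← pow_add, ← pow_add, show (4 : ℂ) = 2 ^ 2 by norm_num, ← pow_mul, ← pow_add]
    congr 1
    omega
  have hn_fact : (n.factorial : ℂ) ≠ 0 := Nat.cast_ne_zero.mpr n.factorial_ne_zero
  have hK_fact : ((N - 1 - n).factorial : ℂ) ≠ 0 :=
    Nat.cast_ne_zero.mpr (N - 1 - n).factorial_ne_zero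
  rw [reducedTerm_neg_one, reducedTerm_neg_one, neg_pow (4 : ℂ)]
  field_simp
  linear_combination (m.factorial : ℂ) * (N - 1 - m).factorial * hpow

theorem stmt5_general (N m n : ℕ) (hmn : m < n) (hn : n ≤ N - 1) :
    Tendsto
      (fun A : ℂ =>
        (-1 : ℂ) ^ (n - m) *
            (qfact A m * qdfact A (2 * N - 2 * m - 2) * qfactP A (2 * N - m - 1)) /
          (qfact A n * qdfact A (2 * N - 2 * n - 2) * qfactP A (2 * N - n - 1)))
      (nhdsWithin (-1 : ℂ)
        {A : ℂ | A ≠ 0 ∧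
          qfact A n * qdfact A (2 * N - 2 * n - 2) * qfactP A (2 * N - n - 1) ≠ 0})
      (nhds ((-4 : ℂ) ^ (n - m) * (m.factorial : ℂ) * ((N - 1 - m).factorial : ℂ) /
        ((n.factorial : ℂ) * ((N - 1 - n).factorial : ℂ)))) := by
  have hden : reducedTerm N (-1) n ≠ 0 := by
    rw [reducedTerm_neg_one]
    norm_cast
    positivity
  have hlim : ContinuousAt
      (fun A => (-1 : ℂ) ^ (n - m) * reducedTerm N A m / reducedTerm N A n) (-1) :=
    (continuousAt_const.mul (continuousAt_reducedTerm N m)).div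
      (continuousAt_reducedTerm N n) hden
  rw [← neg_one_pow_mul_reducedTerm_div_reducedTerm_neg_one hmn.le hn]
  refine (hlim.tendsto.mono_left nhdsWithin_le_nhds).congr' ?_
  filter_upwards [self_mem_nhdsWithin] with A ⟨hA, hAden⟩
  rw [qfact_mul_qdfact_mul_qfactP_eq hA hn] at hAden ⊢
  rw [qfact_mul_qdfact_mul_qfactP_eq hA (by omega)]
  rw [mul_div_assoc, mul_div_assoc, mul_div_mul_left _ _ (left_ne_zero_of_mul hAden)]

/-- for `N ≥ 2` and `0 ≤ m < n ≤ N-1`, the expression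
`(-1)^{n-m}·({m}!·{2N-2m-2}!!·{2N-m-1}^+!)/({n}!·{2N-2n-2}!!·{2N-n-1}^+!)`
tends, as `A → -1` along values where the denominator is nonzero, to
`((-4)^{n-m}·m!·(N-1-m)!)/(n!·(N-1-n)!)`. -/
theorem stmt5 (N m n : ℕ) (hN : 2 ≤ N) (hmn : m < n) (hn : n ≤ N - 1) :
    Tendsto
      (fun A : ℂ =>
        (-1 : ℂ) ^ (n - m) *
            (qfact A m * qdfact A (2 * N - 2 * m - 2) * qfactP A (2 * N - m - 1)) /
          (qfact A n * qdfact A (2 * N - 2 * n - 2) * qfactP A (2 * N - n - 1)))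
      (nhdsWithin (-1 : ℂ)
        {A : ℂ | A ≠ 0 ∧
          qfact A n * qdfact A (2 * N - 2 * n - 2) * qfactP A (2 * N - n - 1) ≠ 0})
      (nhds ((-4 : ℂ) ^ (n - m) * (m.factorial : ℂ) * ((N - 1 - m).factorial : ℂ) /
        ((n.factorial : ℂ) * ((N - 1 - n).factorial : ℂ)))) :=
  stmt5_general N m n hmn hn
end

section
/- Fix N ≥ 2 and define N×N matrices T, T* with T_{m,n} = 2^{n-m}(N-1-m)!/((n-m)!(N-1-n)!) for m ≤ n (else 0) and T*_{n,m} = (-2)^{m-n}n!/(m!(n-m)!) for m ≤ n (else 0). Then T·T*·T = T*·T·T* (the braid relation). -/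
/-- `T_{m,n} = 2^{n-m}(N-1-m)!/((n-m)!(N-1-n)!)` for `m ≤ n`, else `0`. -/
noncomputable def Tmat (N : ℕ) : Matrix (Fin N) (Fin N) ℚ :=
  Matrix.of fun m n =>
    if (m : ℕ) ≤ (n : ℕ) then
      2 ^ ((n : ℕ) - (m : ℕ)) * ((N - 1 - (m : ℕ)).factorial : ℚ) /
        ((((n : ℕ) - (m : ℕ)).factorial : ℚ) * ((N - 1 - (n : ℕ)).factorial : ℚ))
    else 0

/-- `T*_{n,m} = (-2)^{m-n}·n!/(m!(n-m)!)` for `m ≤ n`, else `0`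
(first index = row, second index = column). -/
noncomputable def TstarMat (N : ℕ) : Matrix (Fin N) (Fin N) ℚ :=
  Matrix.of fun n m =>
    if (m : ℕ) ≤ (n : ℕ) then
      (-2 : ℚ) ^ ((m : ℤ) - (n : ℤ)) * (((n : ℕ).factorial : ℚ)) /
        ((((m : ℕ).factorial : ℚ)) * ((((n : ℕ) - (m : ℕ)).factorial : ℚ)))
    else 0

/-!
`T` and `T*` are the images of the `2 × 2` matrices `a = !![1, 0; 2, 1]` and
`b = !![1, -1/2; 0, 1]` under the `(N - 1)`-st symmetric power representation of `GL₂`, i.e. the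
action of linear substitutions on binary forms of degree `N - 1`.  The braid relation
`a b a = b a b` holds already for these `2 × 2` matrices (both sides are `!![0, -1/2; 2, 0]`), and
the representation is multiplicative, which comes down to `Polynomial.homogenize` being
multiplicative.
-/

open Polynomial

namespace Polynomial

variable {R : Type*} [CommRing R]

lemma coeff_C_mul_X_add_C_pow (a b : R) (k j : ℕ) :
    ((C a * X + C b) ^ k).coeff j = a ^ j * b ^ (k - j) * k.choose j := by
  have hterm (i : ℕ) : (C a * X) ^ i * C b ^ (k - i) * (k.choose i : R[X]) =
      C (a ^ i * b ^ (k - i) * k.choose i) * X ^ i := by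
    simp only [map_mul, map_pow, map_natCast]
    ring
  simp_rw [add_pow, finsetSum_coeff, hterm, coeff_C_mul_X_pow]
  rw [Finset.sum_ite_eq]
  split_ifs with hj
  · rfl
  · simp [Nat.choose_eq_zero_of_lt (by simpa using hj : k < j)]

lemma homogenize_pow (p : R[X]) {n : ℕ} (hp : p.natDegree ≤ n) (k : ℕ) :
    homogenize (p ^ k) (k * n) = homogenize p n ^ k := by
  induction k with
  | zero => simp
  | succ k ih =>
    rw [pow_succ, Nat.succ_mul, homogenize_mul _ _ (natDegree_pow_le_of_le k hp) hp, ih, pow_succ]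

lemma homogenize_C_mul_X_add_C (a b : R) :
    homogenize (C a * X + C b) 1 = .C a * .X 0 + .C b * .X 1 := by
  simp [homogenize_add, homogenize_C_mul]

lemma aeval_homogenize {A : Type*} [CommRing A] [Algebra R A] (p : R[X]) (d : ℕ)
    (x : Fin 2 → A) :
    MvPolynomial.aeval x (homogenize p d) =
      ∑ k : Fin (d + 1), p.coeff k • (x 0 ^ (k : ℕ) * x 1 ^ (d - k)) := by
  rw [homogenize, map_sum, Finset.Nat.sum_antidiagonal_eq_sum_range_succ_mk,
    Fin.sum_univ_eq_sum_range (fun k => p.coeff k • (x 0 ^ k * x 1 ^ (d - k)))]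
  refine Finset.sum_congr rfl fun k _ => ?_
  simp [MvPolynomial.aeval_monomial, Finsupp.prod_fintype, Algebra.smul_def]

end Polynomial

namespace Matrix

variable {R : Type*} [CommRing R]

/-- `symPowRow d g m` is the form `(g₀₀ x + g₀₁ y) ^ m * (g₁₀ x + g₁₁ y) ^ (d - m)` dehomogenized
at `y = 1`, and row `m` of `symPow d g` lists its coefficients: `symPow d g` is the matrix of the
substitution by `g` on binary forms of degree `d`, in the basis `x ^ n * y ^ (d - n)`. -/
noncomputable def symPowRow (d : ℕ) (g : Matrix (Fin 2) (Fin 2) R) (m : ℕ) : R[X] :=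
  (C (g 0 0) * X + C (g 0 1)) ^ m * (C (g 1 0) * X + C (g 1 1)) ^ (d - m)

noncomputable def symPow (d : ℕ) (g : Matrix (Fin 2) (Fin 2) R) :
    Matrix (Fin (d + 1)) (Fin (d + 1)) R :=
  of fun m n => (symPowRow d g m).coeff n

lemma homogenize_symPowRow (d : ℕ) (g : Matrix (Fin 2) (Fin 2) R) {m : ℕ} (hm : m ≤ d) :
    homogenize (symPowRow d g m) d =
      (.C (g 0 0) * .X 0 + .C (g 0 1) * .X 1) ^ m *
        (.C (g 1 0) * .X 0 + .C (g 1 1) * .X 1) ^ (d - m) := by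
  have hlin (a b : R) : (C a * X + C b).natDegree ≤ 1 := natDegree_linear_le
  have key := homogenize_mul _ _ (natDegree_pow_le_of_le m (hlin (g 0 0) (g 0 1)))
    (natDegree_pow_le_of_le (d - m) (hlin (g 1 0) (g 1 1)))
  rwa [homogenize_pow _ (hlin _ _), homogenize_pow _ (hlin _ _), homogenize_C_mul_X_add_C,
    homogenize_C_mul_X_add_C, show m * 1 + (d - m) * 1 = d by omega] at key

lemma symPowRow_mul (d : ℕ) (g h : Matrix (Fin 2) (Fin 2) R) {m : ℕ} (hm : m ≤ d) :
    symPowRow d (g * h) m = ∑ k : Fin (d + 1), (symPowRow d g m).coeff k • symPowRow d h k := by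
  calc _ = MvPolynomial.aeval ![C (h 0 0) * X + C (h 0 1), C (h 1 0) * X + C (h 1 1)]
          (homogenize (symPowRow d g m) d) := by
        rw [homogenize_symPowRow d g hm]
        simp only [map_mul, map_pow, map_add, MvPolynomial.algHom_C, algebraMap_eq,
          MvPolynomial.aeval_X, cons_val_zero, cons_val_one, cons_val_fin_one, symPowRow,
          mul_apply, Fin.sum_univ_two]
        ring
    _ = _ := by
        rw [aeval_homogenize]
        rfl

theorem symPow_mul (d : ℕ) (g h : Matrix (Fin 2) (Fin 2) R) :
    symPow d (g * h) = symPow d g * symPow d h := by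
  ext m n
  rw [mul_apply, symPow, of_apply, symPowRow_mul d g h (Fin.is_le m), finsetSum_coeff]
  simp [symPow, coeff_smul]

lemma symPow_apply_of_lower (d : ℕ) (a c e : R) (m n : Fin (d + 1)) :
    symPow d !![a, 0; c, e] m n =
      if (m : ℕ) ≤ n then a ^ (m : ℕ) * c ^ ((n : ℕ) - m) * e ^ (d - n) * (d - m).choose (n - m)
      else 0 := by
  have hn := n.is_le
  simp only [symPow, symPowRow, of_apply, cons_val', cons_val_zero, cons_val_one, empty_val',
    cons_val_fin_one, map_zero, add_zero, mul_pow, ← C_pow, mul_assoc, coeff_C_mul,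
    coeff_X_pow_mul', coeff_C_mul_X_add_C_pow]
  split_ifs with hmn
  · rw [show d - m - (n - m) = d - n by omega, ← mul_assoc, ← mul_assoc]
  · exact mul_zero _

lemma symPow_apply_of_upper (d : ℕ) (a b e : R) (m n : Fin (d + 1)) :
    symPow d !![a, b; 0, e] m n =
      a ^ (n : ℕ) * b ^ ((m : ℕ) - n) * e ^ (d - m) * (m : ℕ).choose n := by
  simp only [symPow, symPowRow, of_apply, cons_val', cons_val_zero, cons_val_one, empty_val',
    cons_val_fin_one, map_zero, zero_mul, zero_add, ← C_pow, coeff_mul_C, coeff_C_mul_X_add_C_pow]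
  ring

end Matrix

open Matrix

lemma Tmat_eq_symPow (d : ℕ) : Tmat (d + 1) = symPow d !![1, 0; 2, 1] := by
  ext m n
  rw [symPow_apply_of_lower, Tmat, of_apply, Nat.add_sub_cancel]
  split_ifs with hmn
  · rw [Nat.cast_choose ℚ (by omega : (n : ℕ) - m ≤ d - m),
      show d - m - (n - m) = d - n by omega]
    ring
  · rfl

lemma TstarMat_eq_symPow (d : ℕ) : TstarMat (d + 1) = symPow d !![1, -2⁻¹; 0, 1] := by
  ext n m
  rw [symPow_apply_of_upper, TstarMat, of_apply]
  split_ifs with hmn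
  · rw [Nat.cast_choose ℚ hmn, show (m : ℤ) - n = -((n - m : ℕ) : ℤ) by omega, _root_.zpow_neg,
      zpow_natCast, ← inv_pow, ← neg_inv]
    ring
  · rw [Nat.choose_eq_zero_of_lt (by omega), Nat.cast_zero, mul_zero]

theorem stmt10_general (N : ℕ) :
    Tmat N * TstarMat N * Tmat N = TstarMat N * Tmat N * TstarMat N := by
  obtain _ | d := N
  · exact Subsingleton.elim _ _
  have braid : !![(1 : ℚ), 0; 2, 1] * !![1, -2⁻¹; 0, 1] * !![1, 0; 2, 1] =
      !![1, -2⁻¹; 0, 1] * !![1, 0; 2, 1] * !![1, -2⁻¹; 0, 1] := by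
    norm_num [Matrix.mul_fin_two]
  rw [Tmat_eq_symPow, TstarMat_eq_symPow, ← symPow_mul, ← symPow_mul, braid, symPow_mul, symPow_mul]

/-- the matrices `T` and `T*` satisfy the braid relation
`T·T*·T = T*·T·T*`. -/
theorem stmt10 (N : ℕ) (hN : 2 ≤ N) :
    Tmat N * TstarMat N * Tmat N = TstarMat N * Tmat N * TstarMat N :=
  stmt10_general N
end

section
/- Fix N ≥ 2 and let J be the N×N tridiagonal matrix (indices 0,…,N-1) with J_{m,m-1} = m, J_{m,m} = 2(N-2m-1), J_{m,m+1} = -4(N-m-1), and all other entries zero. Let a_n ∈ ℚ^N be the vector with entries (a_n)_m = 2^{n-m}(N-1-m)!/((n-m)!(N-1-n)!) for m ≤ n and 0 otherwise. Then for 0 ≤ n ≤ N-2, J·a_n = (n+1)·a_{n+1}. -/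
set_option maxHeartbeats 1000000


/-- The tridiagonal matrix `J` with `J_{m,m-1} = m`, `J_{m,m} = 2(N-2m-1)`,
`J_{m,m+1} = -4(N-m-1)` and zeros elsewhere. -/
def Jmat (N : ℕ) : Matrix (Fin N) (Fin N) ℚ :=
  Matrix.of fun m l =>
    if (l : ℕ) + 1 = (m : ℕ) then (m : ℚ)
    else if (l : ℕ) = (m : ℕ) then 2 * ((N : ℚ) - 2 * ((m : ℕ) : ℚ) - 1)
    else if (m : ℕ) + 1 = (l : ℕ) then -4 * ((N : ℚ) - ((m : ℕ) : ℚ) - 1)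
    else 0

/-- `a_n ∈ ℚ^N` with `(a_n)_m = 2^{n-m}(N-1-m)!/((n-m)!(N-1-n)!)` for `m ≤ n`, else `0`. -/
noncomputable def aVec (N n : ℕ) : Fin N → ℚ := fun m =>
  if (m : ℕ) ≤ n then
    2 ^ (n - (m : ℕ)) * ((N - 1 - (m : ℕ)).factorial : ℚ) /
      (((n - (m : ℕ)).factorial : ℚ) * ((N - 1 - n).factorial : ℚ))
  else 0

lemma sumTri1 (g : ℕ → ℚ) (N m : ℕ) (h1 : 1 ≤ m) (h2 : m + 1 < N)
    (hg : ∀ l, l < N → l + 1 ≠ m → l ≠ m → m + 1 ≠ l → g l = 0) :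
    ∑ l ∈ Finset.range N, g l = g (m-1) + g m + g (m+1) := by
  have hsub : ({m-1, m, m+1} : Finset ℕ) ⊆ Finset.range N := by
    intro x hx
    simp only [Finset.mem_insert, Finset.mem_singleton] at hx
    simp only [Finset.mem_range]; omega
  have hz : ∀ x ∈ Finset.range N, x ∉ ({m-1, m, m+1} : Finset ℕ) → g x = 0 := by
    intro x hx hx'
    simp only [Finset.mem_insert, Finset.mem_singleton, not_or] at hx'
    exact hg x (Finset.mem_range.mp hx) (by omega) (by omega) (by omega)
  rw [← Finset.sum_subset hsub hz]
  rw [Finset.sum_insert (by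
      simp only [Finset.mem_insert, Finset.mem_singleton]; push_neg
      constructor <;> omega),
    Finset.sum_pair (by omega)]
  ring

lemma sumTri0 (g : ℕ → ℚ) (N : ℕ) (h2 : 2 ≤ N)
    (hg : ∀ l, l < N → 2 ≤ l → g l = 0) :
    ∑ l ∈ Finset.range N, g l = g 0 + g 1 := by
  have hsub : ({0, 1} : Finset ℕ) ⊆ Finset.range N := by
    intro x hx
    simp only [Finset.mem_insert, Finset.mem_singleton] at hx
    simp only [Finset.mem_range]; omega
  have hz : ∀ x ∈ Finset.range N, x ∉ ({0, 1} : Finset ℕ) → g x = 0 := by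
    intro x hx hx'
    simp only [Finset.mem_insert, Finset.mem_singleton, not_or] at hx'
    exact hg x (Finset.mem_range.mp hx) (by omega)
  rw [← Finset.sum_subset hsub hz]
  rw [Finset.sum_pair (by omega)]

/-- for `0 ≤ n ≤ N-2`, `J·a_n = (n+1)·a_{n+1}`. -/
theorem stmt12 (N : ℕ) (hN : 2 ≤ N) (n : ℕ) (hn : n ≤ N - 2) :
    (Jmat N).mulVec (aVec N n) = ((n : ℚ) + 1) • aVec N (n + 1) := by
  funext m
  rcases m with ⟨M, hMlt⟩
  simp only [Matrix.mulVec, dotProduct, Pi.smul_apply, smul_eq_mul, Jmat, aVec,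
    Matrix.of_apply, Fin.val_mk]
  rw [Fin.sum_univ_eq_sum_range (fun l =>
    (if l + 1 = M then (M : ℚ)
     else if l = M then 2 * ((N : ℚ) - 2 * (M : ℚ) - 1)
     else if M + 1 = l then -4 * ((N : ℚ) - (M : ℚ) - 1)
     else 0) *
    (if l ≤ n then 2 ^ (n - l) * ((N - 1 - l).factorial : ℚ) /
      (((n - l).factorial : ℚ) * ((N - 1 - n).factorial : ℚ)) else 0)) N]
  by_cases hmn : M ≤ n
  · obtain ⟨j, hj⟩ : ∃ j, N = n + 2 + j := ⟨N - n - 2, by omega⟩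
    by_cases hM0 : M = 0
    · subst hM0
      rw [sumTri0 _ N hN (fun l hl h2l => by
        by_cases h : l ≤ n
        · rw [if_neg (by omega), if_neg (by omega), if_neg (by omega), zero_mul]
        · rw [if_neg h, mul_zero])]
      simp only []
      by_cases hn0 : n = 0
      · subst hn0
        split_ifs <;> try (exfalso; first | assumption | omega)
        rw [show N - 1 - 0 = j + 1 by omega, show N - 1 - (0+1) = j by omega,
            show (N:ℚ) = (j:ℚ) + 2 by
              have e : N = j + 2 := by omega
              rw [e]; push_cast; ring]
        have f2 : ((j.factorial : ℕ) : ℚ) ≠ 0 := Nat.cast_ne_zero.mpr (Nat.factorial_ne_zero _)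
        simp only [Nat.factorial_succ, Nat.sub_self, Nat.factorial_zero]
        push_cast
        field_simp
        ring
      · obtain ⟨k, hk⟩ : ∃ k, n = k + 1 := ⟨n - 1, by omega⟩
        split_ifs <;> try (exfalso; first | assumption | omega)
        rw [show n - 0 = k + 1 by omega, show N - 1 - 0 = k + j + 2 by omega,
            show N - 1 - 1 = k + j + 1 by omega, show n - 1 = k by omega,
            show N - 1 - n = j + 1 by omega, show n + 1 - 0 = k + 2 by omega,
            show N - 1 - (n+1) = j by omega,
            show (N:ℚ) = (k:ℚ) + (j:ℚ) + 3 by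
              have e : N = k + j + 3 := by omega
              rw [e]; push_cast; ring,
            show (n:ℚ) = (k:ℚ) + 1 by rw [hk]; push_cast; ring]
        have f1 : ((k.factorial : ℕ) : ℚ) ≠ 0 := Nat.cast_ne_zero.mpr (Nat.factorial_ne_zero _)
        have f2 : ((j.factorial : ℕ) : ℚ) ≠ 0 := Nat.cast_ne_zero.mpr (Nat.factorial_ne_zero _)
        have f3 : (((k+j).factorial : ℕ) : ℚ) ≠ 0 := Nat.cast_ne_zero.mpr (Nat.factorial_ne_zero _)
        simp only [Nat.factorial_succ]
        push_cast
        field_simp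
        ring
    · have hM1 : 1 ≤ M := by omega
      rw [sumTri1 _ N M hM1 (by omega) (fun l hl h1 h2 h3 => by
        rw [if_neg h1, if_neg h2, if_neg h3, zero_mul])]
      simp only []
      by_cases hkn : M = n
      · split_ifs <;> try (exfalso; first | assumption | omega)
        rw [show n - (M - 1) = 1 by omega, show N - 1 - (M - 1) = j + 2 by omega,
            show n - M = 0 by omega, show N - 1 - M = j + 1 by omega,
            show N - 1 - n = j + 1 by omega, show n + 1 - M = 1 by omega,
            show N - 1 - (n+1) = j by omega,
            show (N:ℚ) = (n:ℚ) + (j:ℚ) + 2 by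
              have e : N = n + j + 2 := by omega
              rw [e]; push_cast; ring,
            show (M:ℚ) = (n:ℚ) by rw [hkn]]
        have f2 : ((j.factorial : ℕ) : ℚ) ≠ 0 := Nat.cast_ne_zero.mpr (Nat.factorial_ne_zero _)
        simp only [Nat.factorial_succ, Nat.factorial_zero, Nat.factorial_one]
        push_cast
        field_simp
        ring
      · obtain ⟨k, hk⟩ : ∃ k, n = M + k + 1 := ⟨n - M - 1, by omega⟩
        split_ifs <;> try (exfalso; first | assumption | omega)
        rw [show n - (M - 1) = k + 2 by omega, show N - 1 - (M - 1) = k + j + 3 by omega,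
            show n - M = k + 1 by omega, show N - 1 - M = k + j + 2 by omega,
            show n - (M + 1) = k by omega, show N - 1 - (M + 1) = k + j + 1 by omega,
            show N - 1 - n = j + 1 by omega, show n + 1 - M = k + 2 by omega,
            show N - 1 - (n+1) = j by omega,
            show (N:ℚ) = (M:ℚ) + (k:ℚ) + (j:ℚ) + 3 by
              have e : N = M + k + j + 3 := by omega
              rw [e]; push_cast; ring,
            show (n:ℚ) = (M:ℚ) + (k:ℚ) + 1 by rw [hk]; push_cast; ring]
        have f1 : ((k.factorial : ℕ) : ℚ) ≠ 0 := Nat.cast_ne_zero.mpr (Nat.factorial_ne_zero _)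
        have f2 : ((j.factorial : ℕ) : ℚ) ≠ 0 := Nat.cast_ne_zero.mpr (Nat.factorial_ne_zero _)
        have f3 : (((k+j).factorial : ℕ) : ℚ) ≠ 0 := Nat.cast_ne_zero.mpr (Nat.factorial_ne_zero _)
        simp only [Nat.factorial_succ]
        push_cast
        field_simp
        ring
  by_cases hB : M = n + 1
  · -- case M = n+1
    rw [Finset.sum_eq_single_of_mem n (by simp only [Finset.mem_range]; omega)
        (fun l hl hlne => by
          by_cases h : l ≤ n
          · rw [if_neg (by omega), if_neg (by omega), if_neg (by omega), zero_mul]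
          · rw [if_neg h, mul_zero])]
    rw [if_pos (by omega : n + 1 = M), if_pos (le_refl n),
        if_pos (by omega : M ≤ n + 1)]
    rw [show n - n = 0 by omega, show n + 1 - M = 0 by omega]
    have e1 : ((N - 1 - n).factorial : ℚ) ≠ 0 := Nat.cast_ne_zero.mpr (Nat.factorial_ne_zero _)
    have e2 : ((N - 1 - (n+1)).factorial : ℚ) ≠ 0 := Nat.cast_ne_zero.mpr (Nat.factorial_ne_zero _)
    have e3 : (M : ℚ) = (n : ℚ) + 1 := by rw [hB]; push_cast; ring
    rw [e3, show N - 1 - M = N - 1 - (n + 1) by omega]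
    simp only [pow_zero, Nat.factorial_zero, Nat.cast_one, one_mul]
    field_simp
  · -- case M ≥ n+2
    rw [Finset.sum_eq_zero (fun l hl => by
      by_cases h : l ≤ n
      · rw [if_neg (by omega), if_neg (by omega), if_neg (by omega), zero_mul]
      · rw [if_neg h, mul_zero])]
    rw [if_neg (by omega : ¬ M ≤ n + 1), mul_zero]
end

section
/- Let R̂(X) be the rational function R̂_{n,m}(X) = (-1)^{n-m}·({m}_X!·{2N-2m-2}_X!!·{2N-m-1}_X^+!)/({n}_X!·{2N-2n-2}_X!!·{2N-n-1}_X^+!) ∈ ℚ(X), where {k}_X = (-X)^k - (-X)^{-k} and {k}_X^+ = (-X)^k + (-X)^{-k}, for fixed 0 ≤ m < n ≤ N-1. Then for p odd with p ≥ 2N+1, A a primitive 2p-th root of unity, and c = (p-1)/2 - N, the quantity ({m}!·{2c+2n+1}!!·{2c+n+1}^+!)/({n}!·{2c+2m+1}!!·{2c+m+1}^+!) (defined via (-A)) equals R̂(A). In particular this quantity, as a function of A, is the evaluation of a single rational function independent of p. -/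
open Finset

/-! The same quantities as rational functions in an indeterminate `X`. -/

/-- `{k}_X = (-X)^k - (-X)^{-k} ∈ ℚ(X)` -/
noncomputable def qbrX (k : ℕ) : RatFunc ℚ :=
  (-(RatFunc.X)) ^ (k : ℤ) - (-(RatFunc.X)) ^ (-(k : ℤ))

/-- `{k}_X^+ = (-X)^k + (-X)^{-k} ∈ ℚ(X)` -/
noncomputable def qbrXP (k : ℕ) : RatFunc ℚ :=
  (-(RatFunc.X)) ^ (k : ℤ) + (-(RatFunc.X)) ^ (-(k : ℤ))

/-- `{k}_X!` -/
noncomputable def qfactX (k : ℕ) : RatFunc ℚ := ∏ j ∈ Finset.range k, qbrX (j + 1)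

/-- `{k}_X^+!` -/
noncomputable def qfactXP (k : ℕ) : RatFunc ℚ := ∏ j ∈ Finset.range k, qbrXP (j + 1)

/-- `{k}_X!!` -/
noncomputable def qdfactX (k : ℕ) : RatFunc ℚ :=
  ∏ i ∈ Finset.range ((k + 1) / 2), qbrX (k - 2 * i)

/-- `R̂_{n,m}(X) = (-1)^{n-m}·({m}_X!·{2N-2m-2}_X!!·{2N-m-1}_X^+!)/({n}_X!·{2N-2n-2}_X!!·{2N-n-1}_X^+!)`. -/
noncomputable def Rhat (N n m : ℕ) : RatFunc ℚ :=
  (-1 : RatFunc ℚ) ^ (n - m) *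
      (qfactX m * qdfactX (2 * N - 2 * m - 2) * qfactXP (2 * N - m - 1)) /
    (qfactX n * qdfactX (2 * N - 2 * n - 2) * qfactXP (2 * N - n - 1))

/-! Put `q = -A`, a primitive `p`-th root of unity. Since `q ^ p = 1`, `{p - k} = -{k}` and
`{p - k}^+ = {k}^+`: as `n` grows, the factors gained by `{2c+2n+1}!!` and `{2c+n+1}^+!` are,
up to sign, those lost by `{2N-2n-2}!!` and `{2N-n-1}^+!`. On the side of `R̂`, evaluation at `A`
may be taken factor by factor, since no denominator vanishes there: `{k} ≠ 0` for `0 < k < p`,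
and `{k}^+ ≠ 0` because `p` is odd. -/

namespace RatFunc

universe u

variable {K L : Type u} [Field K] [Field L] (f : K →+* L) (a : L)

/-- `eval f a` is not multiplicative in general; a representation `x = P / Q` with
`Q` not vanishing at `a` is what makes it compatible with the field operations. -/
def EvalsTo (x : RatFunc K) (v : L) : Prop :=
  ∃ P Q : Polynomial K, Q.eval₂ f a ≠ 0 ∧
    x = algebraMap _ _ P / algebraMap _ _ Q ∧ v = P.eval₂ f a / Q.eval₂ f a

variable {f a}

theorem algebraMap_ne_zero_of_eval₂_ne_zero {Q : Polynomial K} (hQ : Q.eval₂ f a ≠ 0) :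
    algebraMap (Polynomial K) (RatFunc K) Q ≠ 0 :=
  algebraMap_ne_zero fun h0 => hQ (by simp [h0])

theorem EvalsTo.eval_eq {x : RatFunc K} {v : L} (h : EvalsTo f a x v) : eval f a x = v := by
  obtain ⟨P, Q, hQ, rfl, rfl⟩ := h
  have hdenom : (denom (algebraMap _ _ P / algebraMap _ _ Q)).eval₂ f a ≠ 0 := by
    obtain ⟨t, ht⟩ := denom_div_dvd P Q
    intro h0
    exact hQ (by rw [ht, Polynomial.eval₂_mul, h0, zero_mul])
  have hmul := eval_mul f a hdenom (y := algebraMap _ _ Q) (by simp [denom_algebraMap])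
  rw [div_mul_cancel₀ _ (algebraMap_ne_zero_of_eval₂_ne_zero hQ), eval_algebraMap, eval_algebraMap] at hmul
  simp only [Algebra.algebraMap_self, RingHom.id_apply] at hmul
  rw [eq_div_iff hQ, hmul]

variable (f a)

theorem evalsTo_algebraMap (P : Polynomial K) : EvalsTo f a (algebraMap _ _ P) (P.eval₂ f a) :=
  ⟨P, 1, by simp, by simp, by simp⟩

theorem evalsTo_one : EvalsTo f a 1 1 := by
  simpa using evalsTo_algebraMap f a 1

theorem evalsTo_X : EvalsTo f a X a := by
  simpa [algebraMap_X] using evalsTo_algebraMap f a Polynomial.X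

variable {f a} {x y : RatFunc K} {v w : L}

theorem EvalsTo.neg (hx : EvalsTo f a x v) : EvalsTo f a (-x) (-v) := by
  obtain ⟨P, Q, hQ, rfl, rfl⟩ := hx
  exact ⟨-P, Q, hQ, by rw [map_neg, neg_div], by rw [Polynomial.eval₂_neg, neg_div]⟩

theorem EvalsTo.add (hx : EvalsTo f a x v) (hy : EvalsTo f a y w) :
    EvalsTo f a (x + y) (v + w) := by
  obtain ⟨P, Q, hQ, rfl, rfl⟩ := hx
  obtain ⟨P', Q', hQ', rfl, rfl⟩ := hy
  refine ⟨P * Q' + Q * P', Q * Q', by simp [hQ, hQ'], ?_, ?_⟩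
  · rw [div_add_div _ _ (algebraMap_ne_zero_of_eval₂_ne_zero hQ)
      (algebraMap_ne_zero_of_eval₂_ne_zero hQ'), map_add, map_mul, map_mul, map_mul]
  · rw [div_add_div _ _ hQ hQ']
    simp only [Polynomial.eval₂_add, Polynomial.eval₂_mul]

theorem EvalsTo.sub (hx : EvalsTo f a x v) (hy : EvalsTo f a y w) :
    EvalsTo f a (x - y) (v - w) := by
  simpa only [sub_eq_add_neg] using hx.add hy.neg

theorem EvalsTo.mul (hx : EvalsTo f a x v) (hy : EvalsTo f a y w) :
    EvalsTo f a (x * y) (v * w) := by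
  obtain ⟨P, Q, hQ, rfl, rfl⟩ := hx
  obtain ⟨P', Q', hQ', rfl, rfl⟩ := hy
  refine ⟨P * P', Q * Q', by simp [hQ, hQ'], ?_, ?_⟩
  · rw [div_mul_div_comm, map_mul, map_mul]
  · rw [div_mul_div_comm, Polynomial.eval₂_mul, Polynomial.eval₂_mul]

theorem EvalsTo.inv (hx : EvalsTo f a x v) (hv : v ≠ 0) : EvalsTo f a x⁻¹ v⁻¹ := by
  obtain ⟨P, Q, hQ, rfl, rfl⟩ := hx
  exact ⟨Q, P, (div_ne_zero_iff.1 hv).1, by rw [inv_div], by rw [inv_div]⟩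

theorem EvalsTo.div (hx : EvalsTo f a x v) (hy : EvalsTo f a y w) (hw : w ≠ 0) :
    EvalsTo f a (x / y) (v / w) := by
  simpa only [div_eq_mul_inv] using hx.mul (hy.inv hw)

theorem EvalsTo.pow (hx : EvalsTo f a x v) (n : ℕ) : EvalsTo f a (x ^ n) (v ^ n) := by
  induction n with
  | zero => simpa using evalsTo_one f a
  | succ n ih => simpa only [pow_succ] using ih.mul hx

theorem EvalsTo.zpow (hx : EvalsTo f a x v) (hv : v ≠ 0) (n : ℤ) :
    EvalsTo f a (x ^ n) (v ^ n) := by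
  cases n with
  | ofNat n => simpa using hx.pow n
  | negSucc n => simpa using (hx.pow (n + 1)).inv (pow_ne_zero _ hv)

theorem evalsTo_prod {ι : Type*} (s : Finset ι) {g : ι → RatFunc K} {u : ι → L}
    (h : ∀ i ∈ s, EvalsTo f a (g i) (u i)) : EvalsTo f a (∏ i ∈ s, g i) (∏ i ∈ s, u i) := by
  induction s using Finset.cons_induction with
  | empty => simpa using evalsTo_one f a
  | cons i s hi ih =>
    rw [prod_cons, prod_cons]
    exact (h i (mem_cons_self i s)).mul (ih fun j hj => h j (mem_cons_of_mem hj))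

end RatFunc

theorem IsPrimitiveRoot.neg_of_odd {R : Type*} [CommRing R] [IsDomain R] {ζ : R} {p : ℕ}
    (h : IsPrimitiveRoot ζ (2 * p)) (hp : Odd p) : IsPrimitiveRoot (-ζ) p := by
  obtain ⟨r, rfl⟩ := hp
  have hζp : ζ ^ (2 * r + 1) = -1 :=
    (h.pow (by omega) (mul_comm _ _)).eq_neg_one_of_two_right
  have hneg : -ζ = (ζ ^ 2) ^ (r + 1) := by
    rw [← pow_mul, show 2 * (r + 1) = (2 * r + 1) + 1 by ring, pow_succ, hζp, neg_one_mul]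
  rw [hneg]
  refine (h.pow (by omega) rfl).pow_of_coprime _ ?_
  rw [show 2 * r + 1 = r + 1 + r by ring]
  simp

section QuantumIntegers

variable {A : ℂ} {p : ℕ}

theorem qbr_eq_neg_of_add_eq (hA : A ≠ 0) (hq : (-A) ^ p = 1) {j k : ℕ} (hjk : j + k = p) :
    qbr A j = -qbr A k := by
  have hA' : -A ≠ 0 := neg_ne_zero.2 hA
  have hj : (j : ℤ) = p - k := by omega
  have hqp : (-A) ^ (p : ℤ) = 1 := by rw [zpow_natCast, hq]
  rw [qbr, qbr, hj, neg_sub, zpow_sub₀ hA', zpow_sub₀ hA', hqp, one_div, div_one, zpow_neg]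
  ring

theorem qbrP_eq_of_add_eq (hA : A ≠ 0) (hq : (-A) ^ p = 1) {j k : ℕ} (hjk : j + k = p) :
    qbrP A j = qbrP A k := by
  have hA' : -A ≠ 0 := neg_ne_zero.2 hA
  have hj : (j : ℤ) = p - k := by omega
  have hqp : (-A) ^ (p : ℤ) = 1 := by rw [zpow_natCast, hq]
  rw [qbrP, qbrP, hj, neg_sub, zpow_sub₀ hA', zpow_sub₀ hA', hqp, one_div, div_one, zpow_neg]
  ring

theorem qbr_ne_zero (hq : IsPrimitiveRoot (-A) p) (hp : Odd p) {k : ℕ} (hk : 0 < k)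
    (hkp : k < p) : qbr A k ≠ 0 := by
  intro h
  have hA' : -A ≠ 0 := hq.ne_zero (by omega)
  have h2k : (-A) ^ (2 * k) = 1 :=
    calc (-A) ^ (2 * k) = (-A) ^ (k : ℤ) * (-A) ^ (k : ℤ) := by
          rw [two_mul, pow_add, zpow_natCast]
      _ = (-A) ^ (k : ℤ) * (-A) ^ (-(k : ℤ)) := by rw [sub_eq_zero.1 h]
      _ = 1 := by rw [← zpow_add₀ hA', add_neg_cancel, zpow_zero]
  have hpk : p ∣ k :=
    (Nat.coprime_two_left.2 hp).symm.dvd_of_dvd_mul_left (hq.dvd_of_pow_eq_one _ h2k)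
  exact absurd (Nat.le_of_dvd hk hpk) (by omega)

theorem qbrP_ne_zero (hq : (-A) ^ p = 1) (hp : Odd p) (k : ℕ) : qbrP A k ≠ 0 := by
  intro h
  have hA' : -A ≠ 0 := by
    rintro h0
    rw [h0, zero_pow (by rintro rfl; simp at hp)] at hq
    exact zero_ne_one hq
  have h2k : (-A) ^ (2 * k) = -1 :=
    calc (-A) ^ (2 * k) = (-A) ^ (k : ℤ) * (-A) ^ (k : ℤ) := by
          rw [two_mul, pow_add, zpow_natCast]
      _ = (-A) ^ (k : ℤ) * -(-A) ^ (-(k : ℤ)) := by rw [eq_neg_of_add_eq_zero_left h]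
      _ = -1 := by rw [mul_neg, ← zpow_add₀ hA', add_neg_cancel, zpow_zero]
  have : (1 : ℂ) = -1 := by
    rw [← hp.neg_one_pow, ← h2k, ← pow_mul, mul_comm, pow_mul, hq, one_pow]
  norm_num at this

theorem qdfact_add_two (A : ℂ) (k : ℕ) : qdfact A (k + 2) = qbr A (k + 2) * qdfact A k := by
  rw [qdfact, qdfact, show (k + 2 + 1) / 2 = (k + 1) / 2 + 1 by omega, prod_range_succ',
    mul_comm]
  congr 1
  exact prod_congr rfl fun i _ => by rw [show k + 2 - 2 * (i + 1) = k - 2 * i by omega]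

theorem qfactP_succ (A : ℂ) (k : ℕ) : qfactP A (k + 1) = qfactP A k * qbrP A (k + 1) :=
  prod_range_succ _ _

theorem qfact_ne_zero (hq : IsPrimitiveRoot (-A) p) (hp : Odd p) {k : ℕ} (hkp : k < p) :
    qfact A k ≠ 0 :=
  prod_ne_zero_iff.2 fun j hj => qbr_ne_zero hq hp (by omega) (by rw [mem_range] at hj; omega)

theorem qdfact_ne_zero (hq : IsPrimitiveRoot (-A) p) (hp : Odd p) {k : ℕ} (hkp : k < p) :
    qdfact A k ≠ 0 :=
  prod_ne_zero_iff.2 fun i hi => qbr_ne_zero hq hp (by rw [mem_range] at hi; omega) (by omega)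

theorem qfactP_ne_zero (hq : (-A) ^ p = 1) (hp : Odd p) (k : ℕ) : qfactP A k ≠ 0 :=
  prod_ne_zero_iff.2 fun j _ => qbrP_ne_zero hq hp (j + 1)

theorem qfact_mul_qdfact_mul_qfactP_ne_zero (hq : IsPrimitiveRoot (-A) p) (hp : Odd p)
    {k l : ℕ} (hk : k < p) (hl : l < p) (j : ℕ) : qfact A k * qdfact A l * qfactP A j ≠ 0 :=
  mul_ne_zero (mul_ne_zero (qfact_ne_zero hq hp hk) (qdfact_ne_zero hq hp hl))
    (qfactP_ne_zero hq.pow_eq_one hp j)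

theorem qdfact_mul_qdfact_reflect (hA : A ≠ 0) (hq : (-A) ^ p = 1) {a b : ℕ}
    (hab : a + b + 2 = p) {k : ℕ} (hk : 2 * k ≤ b) :
    qdfact A (a + 2 * k) * qdfact A (b - 2 * k) = (-1) ^ k * (qdfact A a * qdfact A b) := by
  induction k with
  | zero => simp
  | succ k ih =>
    have ih := ih (by omega)
    rw [show b - 2 * k = b - 2 * (k + 1) + 2 by omega, qdfact_add_two] at ih
    rw [show a + 2 * (k + 1) = a + 2 * k + 2 by ring, qdfact_add_two,
      qbr_eq_neg_of_add_eq hA hq (k := b - 2 * (k + 1) + 2) (by omega), pow_succ]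
    linear_combination (-1 : ℂ) * ih

theorem qfactP_mul_qfactP_reflect (hA : A ≠ 0) (hq : (-A) ^ p = 1) {a b : ℕ}
    (hab : a + b + 1 = p) {k : ℕ} (hk : k ≤ b) :
    qfactP A (a + k) * qfactP A (b - k) = qfactP A a * qfactP A b := by
  induction k with
  | zero => simp
  | succ k ih =>
    have ih := ih (by omega)
    rw [show b - k = b - (k + 1) + 1 by omega, qfactP_succ] at ih
    rw [← add_assoc, qfactP_succ,
      qbrP_eq_of_add_eq hA hq (k := b - (k + 1) + 1) (by omega)]
    linear_combination ih

end QuantumIntegers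

section Evaluation

open RatFunc

variable {A : ℂ}

theorem evalsTo_qbrX (hA : A ≠ 0) (k : ℕ) : EvalsTo (algebraMap ℚ ℂ) A (qbrX k) (qbr A k) :=
  have hX := (evalsTo_X (algebraMap ℚ ℂ) A).neg
  (hX.zpow (neg_ne_zero.2 hA) _).sub (hX.zpow (neg_ne_zero.2 hA) _)

theorem evalsTo_qbrXP (hA : A ≠ 0) (k : ℕ) : EvalsTo (algebraMap ℚ ℂ) A (qbrXP k) (qbrP A k) :=
  have hX := (evalsTo_X (algebraMap ℚ ℂ) A).neg
  (hX.zpow (neg_ne_zero.2 hA) _).add (hX.zpow (neg_ne_zero.2 hA) _)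

theorem evalsTo_qfactX (hA : A ≠ 0) (k : ℕ) :
    EvalsTo (algebraMap ℚ ℂ) A (qfactX k) (qfact A k) :=
  evalsTo_prod _ fun j _ => evalsTo_qbrX hA (j + 1)

theorem evalsTo_qfactXP (hA : A ≠ 0) (k : ℕ) :
    EvalsTo (algebraMap ℚ ℂ) A (qfactXP k) (qfactP A k) :=
  evalsTo_prod _ fun j _ => evalsTo_qbrXP hA (j + 1)

theorem evalsTo_qdfactX (hA : A ≠ 0) (k : ℕ) :
    EvalsTo (algebraMap ℚ ℂ) A (qdfactX k) (qdfact A k) :=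
  evalsTo_prod _ fun i _ => evalsTo_qbrX hA (k - 2 * i)

theorem eval_Rhat (hA : A ≠ 0) {N n m : ℕ}
    (hden : qfact A n * qdfact A (2 * N - 2 * n - 2) * qfactP A (2 * N - n - 1) ≠ 0) :
    eval (algebraMap ℚ ℂ) A (Rhat N n m) =
      (-1) ^ (n - m) * (qfact A m * qdfact A (2 * N - 2 * m - 2) * qfactP A (2 * N - m - 1)) /
        (qfact A n * qdfact A (2 * N - 2 * n - 2) * qfactP A (2 * N - n - 1)) := by
  have hfactors (k l j : ℕ) := ((evalsTo_qfactX hA k).mul (evalsTo_qdfactX hA l)).mul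
    (evalsTo_qfactXP hA j)
  exact ((((evalsTo_one _ _).neg.pow _).mul (hfactors _ _ _)).div (hfactors _ _ _) hden).eval_eq

end Evaluation

theorem stmt18_general (N m n : ℕ) (hmn : m < n) (hn : n ≤ N - 1)
    (p : ℕ) (hp : Odd p) (c : ℕ) (hc : 2 * c + 2 * N + 1 = p)
    (A : ℂ) (hA : IsPrimitiveRoot A (2 * p)) :
    (qfact A m * qdfact A (2 * c + 2 * n + 1) * qfactP A (2 * c + n + 1)) /
        (qfact A n * qdfact A (2 * c + 2 * m + 1) * qfactP A (2 * c + m + 1)) =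
      RatFunc.eval (algebraMap ℚ ℂ) A (Rhat N n m) := by
  have hA0 : A ≠ 0 := hA.ne_zero (by omega)
  have hq : IsPrimitiveRoot (-A) p := hA.neg_of_odd hp
  have hdfact := qdfact_mul_qdfact_reflect hA0 hq.pow_eq_one
    (a := 2 * c + 2 * m + 1) (b := 2 * N - 2 * m - 2) (by omega) (k := n - m) (by omega)
  have hfactP := qfactP_mul_qfactP_reflect hA0 hq.pow_eq_one
    (a := 2 * c + m + 1) (b := 2 * N - m - 1) (by omega) (k := n - m) (by omega)
  rw [show 2 * c + 2 * m + 1 + 2 * (n - m) = 2 * c + 2 * n + 1 by omega,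
    show 2 * N - 2 * m - 2 - 2 * (n - m) = 2 * N - 2 * n - 2 by omega] at hdfact
  rw [show 2 * c + m + 1 + (n - m) = 2 * c + n + 1 by omega,
    show 2 * N - m - 1 - (n - m) = 2 * N - n - 1 by omega] at hfactP
  have hdenL : qfact A n * qdfact A (2 * c + 2 * m + 1) * qfactP A (2 * c + m + 1) ≠ 0 :=
    qfact_mul_qdfact_mul_qfactP_ne_zero hq hp (by omega) (by omega) _
  have hdenR : qfact A n * qdfact A (2 * N - 2 * n - 2) * qfactP A (2 * N - n - 1) ≠ 0 :=
    qfact_mul_qdfact_mul_qfactP_ne_zero hq hp (by omega) (by omega) _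
  rw [eval_Rhat hA0 hdenR, div_eq_div_iff hdenL hdenR]
  linear_combination (qfact A m * qfact A n) *
    (qfactP A (2 * c + n + 1) * qfactP A (2 * N - n - 1) * hdfact +
      (-1) ^ (n - m) * qdfact A (2 * c + 2 * m + 1) * qdfact A (2 * N - 2 * m - 2) * hfactP)

/-- for `p` odd with `p ≥ 2N+1`, `A` a primitive `2p`-th root of unity
and `c = (p-1)/2 - N` (i.e. `2c + 2N + 1 = p`), the quantity
`({m}!·{2c+2n+1}!!·{2c+n+1}^+!)/({n}!·{2c+2m+1}!!·{2c+m+1}^+!)` equals the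
evaluation at `A` of the single rational function `R̂_{n,m}(X)`, independent of `p`. -/
theorem stmt18 (N m n : ℕ) (hN : 2 ≤ N) (hmn : m < n) (hn : n ≤ N - 1)
    (p : ℕ) (hp : Odd p) (hp' : 2 * N + 1 ≤ p) (c : ℕ) (hc : 2 * c + 2 * N + 1 = p)
    (A : ℂ) (hA : IsPrimitiveRoot A (2 * p)) :
    (qfact A m * qdfact A (2 * c + 2 * n + 1) * qfactP A (2 * c + n + 1)) /
        (qfact A n * qdfact A (2 * c + 2 * m + 1) * qfactP A (2 * c + m + 1)) =
      RatFunc.eval (algebraMap ℚ ℂ) A (Rhat N n m) :=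
  stmt18_general N m n hmn hn p hp c hc A hA
end
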